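/- Conditions under which the MAR-based functional is unbiased (section 3.2): in the setting of the discrepancy formula (π > 0 and Γ + (1−Γ)·H > 0 almost surely, μ and M_MAR integrable), τ_a*(P) := E[M_MAR] equals τ_a(P) := E[μ] if any one of the following holds almost everywhere on {π > 0}: (i) M_R = M_S (the missing-at-random case); (ii) Γ = 0 (the outcome is completely unobserved initially); or (iii) (1−Γ)·(1−H) = 0 (the outcome is eventually observed on everyone). -/

import Mathlib

/-!
A.e. on `{π > 0}`, substituting the characterizations into that of `M_MAR` and cancelling `π`
gives `M_MAR · (Γ + (1-Γ)H) = Γ M_R + (1-Γ) H M_S`: `M_MAR` is the `(Γ, (1-Γ)H)`-weighted mean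
of `M_R` and `M_S`, whereas `μ` is their `(Γ, 1-Γ)`-weighted mean. Hence
`(μ - M_MAR) · (Γ + (1-Γ)H) = Γ(1-Γ)(1-H)(M_S - M_R)`, which vanishes under each of the three
conditions, so `M_MAR = μ` a.e. and the integrals agree.
-/

open MeasureTheory

section WeightedMean

variable {p g h m mR mS : ℝ}

theorem mul_weight_eq_of_mul_eq (hp : p ≠ 0)
    (hm : m * (g * p + h * (p - g * p)) = mR * (g * p) + mS * (h * ((1 - g) * p))) :
    m * (g + (1 - g) * h) = g * mR + (1 - g) * h * mS :=
  mul_right_cancel₀ hp (by linear_combination hm)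

theorem eq_weighted_mean_iff_of_mul_eq (hD : g + (1 - g) * h ≠ 0)
    (hm : m * (g + (1 - g) * h) = g * mR + (1 - g) * h * mS) :
    m = g * mR + (1 - g) * mS ↔ g * (1 - g) * (1 - h) * (mS - mR) = 0 := by
  have discrepancy : (g * mR + (1 - g) * mS - m) * (g + (1 - g) * h)
      = g * (1 - g) * (1 - h) * (mS - mR) := by
    linear_combination -hm
  rw [eq_comm, ← sub_eq_zero, ← discrepancy, mul_eq_zero, or_iff_left hD]

theorem eq_weighted_mean_of_mul_eq (hD : g + (1 - g) * h ≠ 0)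
    (hm : m * (g + (1 - g) * h) = g * mR + (1 - g) * h * mS)
    (hc : mR = mS ∨ g = 0 ∨ (1 - g) * (1 - h) = 0) :
    m = g * mR + (1 - g) * mS := by
  refine (eq_weighted_mean_iff_of_mul_eq hD hm).2 ?_
  rcases hc with hc | hc | hc
  · simp [hc]
  · simp [hc]
  · linear_combination g * (mS - mR) * hc

end WeightedMean

section Indicators

variable {Ω : Type*} {mΩ : MeasurableSpace Ω} {P : Measure Ω}

theorem eq_zero_or_eq_one_mul {x y : ℝ} (hx : x = 0 ∨ x = 1) (hy : y = 0 ∨ y = 1) :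
    x * y = 0 ∨ x * y = 1 := by
  rcases hx with rfl | rfl <;> simp [hy]

theorem measurable_ite_eq_one_zero {A : Ω → ℝ} (hA : Measurable A) (a : ℝ) :
    Measurable fun ω => if A ω = a then (1 : ℝ) else 0 :=
  Measurable.ite (hA (measurableSet_singleton a)) measurable_const measurable_const

theorem integrable_of_eq_zero_or_eq_one [IsFiniteMeasure P] {f : Ω → ℝ}
    (hf : AEStronglyMeasurable f P) (h01 : ∀ ω, f ω = 0 ∨ f ω = 1) : Integrable f P :=
  .of_bound hf 1 <| .of_forall fun ω => by rcases h01 ω with h | h <;> simp [h]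

theorem integrable_mul_of_eq_zero_or_eq_one {f Y : Ω → ℝ} (hY : Integrable Y P)
    (hf : AEStronglyMeasurable f P) (h01 : ∀ ω, f ω = 0 ∨ f ω = 1) :
    Integrable (fun ω => f ω * Y ω) P :=
  hY.bdd_mul hf (c := 1) <| .of_forall fun ω => by
    rcases h01 ω with h | h <;> simp [h]

end Indicators

section CondExp

variable {Ω E : Type*} {mΩ : MeasurableSpace Ω} {P : Measure Ω} [NormedAddCommGroup E]
  [NormedSpace ℝ E] [CompleteSpace E] (m : MeasurableSpace Ω) {f g k : Ω → E}

theorem condExp_ae_eq_add_of_eq (hf : Integrable f P) (hg : Integrable g P)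
    (hk : ∀ ω, k ω = f ω + g ω) : P[k | m] =ᵐ[P] fun ω => P[f | m] ω + P[g | m] ω := by
  rw [show k = f + g from funext hk]
  exact condExp_add hf hg m

theorem condExp_ae_eq_sub_of_eq (hf : Integrable f P) (hg : Integrable g P)
    (hk : ∀ ω, k ω = f ω - g ω) : P[k | m] =ᵐ[P] fun ω => P[f | m] ω - P[g | m] ω := by
  rw [show k = f - g from funext hk]
  exact condExp_sub hf hg m

end CondExp

/-- Conditions under which the MAR-based functional is unbiased (section 3.2):
in the setting of the discrepancy formula, `τ_a*(P) = E[M_MAR]` equals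
`τ_a(P) = E[μ]` if, a.e. on `{π > 0}`, (i) `M_R = M_S`, or (ii) `Γ = 0`, or
(iii) `(1−Γ)(1−H) = 0`. -/
theorem MAR_functional_unbiased_conditions
    {Ω : Type*} [MeasurableSpace Ω] (P : Measure Ω) [IsProbabilityMeasure P]
    {d : ℕ} (L : Ω → (Fin d → ℝ)) (A R S Y : Ω → ℝ)
    (hL : Measurable L) (hA : Measurable A) (hR : Measurable R)
    (hS : Measurable S) (hY : Integrable Y P)
    (hA01 : ∀ ω, A ω = 0 ∨ A ω = 1)
    (hR01 : ∀ ω, R ω = 0 ∨ R ω = 1)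
    (hS01 : ∀ ω, S ω = 0 ∨ S ω = 1)
    (hSR : ∀ ω, S ω * R ω = 0)
    (a : ℝ) (ha : a = 0 ∨ a = 1)
    (𝓛 : MeasurableSpace Ω) (h𝓛 : 𝓛 = MeasurableSpace.comap L inferInstance)
    (ind : Ω → ℝ) (hind : ind = fun ω => if A ω = a then (1:ℝ) else 0)
    -- arm-a nuisance random variables
    (π Γ H M_R M_S M_MAR : Ω → ℝ)
    (hπ_meas : Measurable[𝓛] π) (hπ_int : Integrable π P)
    (hΓ_meas : Measurable[𝓛] Γ) (hΓ_int : Integrable Γ P)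
    (hH_meas : Measurable[𝓛] H) (hH_int : Integrable H P)
    (hMR_meas : Measurable[𝓛] M_R) (hMR_int : Integrable M_R P)
    (hMS_meas : Measurable[𝓛] M_S) (hMS_int : Integrable M_S P)
    (hMMAR_meas : Measurable[𝓛] M_MAR) (hMMAR_int : Integrable M_MAR P)
    (hπ01 : ∀ ω, 0 ≤ π ω ∧ π ω ≤ 1)
    (hΓ01 : ∀ ω, 0 ≤ Γ ω ∧ Γ ω ≤ 1)
    (hH01 : ∀ ω, 0 ≤ H ω ∧ H ω ≤ 1)
    -- characterizations
    (hπ : P[ind | 𝓛] =ᵐ[P] π)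
    (hΓ : P[fun ω => ind ω * R ω | 𝓛] =ᵐ[P] fun ω => Γ ω * π ω)
    (hH : P[fun ω => ind ω * S ω | 𝓛]
      =ᵐ[P] fun ω => H ω * (P[fun ω' => ind ω' * (1 - R ω') | 𝓛]) ω)
    (hMR : P[fun ω => ind ω * R ω * Y ω | 𝓛] =ᵐ[P] fun ω => M_R ω * (Γ ω * π ω))
    (hMS : P[fun ω => ind ω * S ω * Y ω | 𝓛]
      =ᵐ[P] fun ω => M_S ω * (H ω * ((1 - Γ ω) * π ω)))
    (hMMAR : P[fun ω => ind ω * (R ω + S ω) * Y ω | 𝓛]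
      =ᵐ[P] fun ω => M_MAR ω * (P[fun ω' => ind ω' * (R ω' + S ω') | 𝓛]) ω)
    -- definition of μ, positivity and integrability
    (μ : Ω → ℝ) (hμdef : μ = fun ω => Γ ω * M_R ω + (1 - Γ ω) * M_S ω)
    (hπpos : ∀ᵐ ω ∂P, 0 < π ω)
    (hDpos : ∀ᵐ ω ∂P, 0 < Γ ω + (1 - Γ ω) * H ω)
    (hμ_int : Integrable μ P)
    -- any one of the three conditions, a.e. on {π > 0}
    (hcond : (∀ᵐ ω ∂P, 0 < π ω → M_R ω = M_S ω)
      ∨ (∀ᵐ ω ∂P, 0 < π ω → Γ ω = 0)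
      ∨ (∀ᵐ ω ∂P, 0 < π ω → (1 - Γ ω) * (1 - H ω) = 0)) :
    ∫ ω, M_MAR ω ∂P = ∫ ω, μ ω ∂P := by
  have hind01 : ∀ ω, ind ω = 0 ∨ ind ω = 1 := fun ω => by
    rw [hind]; by_cases h : A ω = a <;> simp [h]
  -- No type ascription here: `𝓛` is a local instance and would be taken as the σ-algebra.
  have hind_meas := hind ▸ (measurable_ite_eq_one_zero hA a).aestronglyMeasurable (μ := P)
  have hindR01 ω := eq_zero_or_eq_one_mul (hind01 ω) (hR01 ω)
  have hindS01 ω := eq_zero_or_eq_one_mul (hind01 ω) (hS01 ω)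
  have hindR_meas := hind_meas.mul hR.aestronglyMeasurable
  have hindS_meas := hind_meas.mul hS.aestronglyMeasurable
  have hindR : Integrable (fun ω => ind ω * R ω) P :=
    integrable_of_eq_zero_or_eq_one hindR_meas hindR01
  have hindS : Integrable (fun ω => ind ω * S ω) P :=
    integrable_of_eq_zero_or_eq_one hindS_meas hindS01
  have hRSY : P[fun ω => ind ω * (R ω + S ω) * Y ω | 𝓛] =ᵐ[P]
      fun ω => P[fun ω => ind ω * R ω * Y ω | 𝓛] ω + P[fun ω => ind ω * S ω * Y ω | 𝓛] ω :=
    condExp_ae_eq_add_of_eq 𝓛 (integrable_mul_of_eq_zero_or_eq_one hY hindR_meas hindR01)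
      (integrable_mul_of_eq_zero_or_eq_one hY hindS_meas hindS01) fun ω => by ring
  have hRS : P[fun ω => ind ω * (R ω + S ω) | 𝓛] =ᵐ[P]
      fun ω => P[fun ω => ind ω * R ω | 𝓛] ω + P[fun ω => ind ω * S ω | 𝓛] ω :=
    condExp_ae_eq_add_of_eq 𝓛 hindR hindS fun ω => mul_add (ind ω) (R ω) (S ω)
  have hNR : P[fun ω => ind ω * (1 - R ω) | 𝓛] =ᵐ[P]
      fun ω => P[ind | 𝓛] ω - P[fun ω => ind ω * R ω | 𝓛] ω :=
    condExp_ae_eq_sub_of_eq 𝓛 (integrable_of_eq_zero_or_eq_one hind_meas hind01) hindR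
      fun ω => mul_one_sub (ind ω) (R ω)
  have hcond' : ∀ᵐ ω ∂P, 0 < π ω → M_R ω = M_S ω ∨ Γ ω = 0 ∨ (1 - Γ ω) * (1 - H ω) = 0 := by
    rcases hcond with h | h | h <;> filter_upwards [h] with ω hω hp <;> simp [hω hp]
  rw [hμdef]
  refine integral_congr_ae ?_
  filter_upwards [hπ, hΓ, hH, hMR, hMS, hMMAR, hRSY, hRS, hNR, hπpos, hDpos, hcond']
    with ω hπω hΓω hHω hMRω hMSω hMMARω hRSYω hRSω hNRω hπp hDp hcω
  rw [hRSYω, hMRω, hMSω, hRSω, hΓω, hHω, hNRω, hΓω, hπω] at hMMARω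
  exact eq_weighted_mean_of_mul_eq hDp.ne' (mul_weight_eq_of_mul_eq hπp.ne' hMMARω.symm)
    (hcω hπp)
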